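/- For every n ≥ 2, if A is a Bernstein set of L with its Euclidean subspace topology, then the space (X, τ(A)) is Lindelöf but not perfect. -/
import Mathlib


open Metric Set TopologicalSpace

noncomputable section

/-- The last coordinate `x (n-1)` of a point of `EuclideanSpace ℝ (Fin n)`
(junk value `0` if `n = 0`). -/
def lastCoord (n : ℕ) (x : EuclideanSpace ℝ (Fin n)) : ℝ :=
  if h : 0 < n then x ⟨n - 1, Nat.sub_lt h one_pos⟩ else 0

/-- The closed upper half-space `X = {x : x (n-1) ≥ 0}`. -/
def HalfSpace (n : ℕ) : Set (EuclideanSpace ℝ (Fin n)) := {x | 0 ≤ lastCoord n x}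

/-- The open upper half-space `P = {x : x (n-1) > 0}`. -/
def OpenHalf (n : ℕ) : Set (EuclideanSpace ℝ (Fin n)) := {x | 0 < lastCoord n x}

/-- The boundary hyperplane `L = {x : x (n-1) = 0}`. -/
def Bdry (n : ℕ) : Set (EuclideanSpace ℝ (Fin n)) := {x | lastCoord n x = 0}

/-- The `n`-th standard basis vector `e` (junk value `0` if `n = 0`). -/
def eVec (n : ℕ) : EuclideanSpace ℝ (Fin n) :=
  if h : 0 < n then EuclideanSpace.single ⟨n - 1, Nat.sub_lt h one_pos⟩ (1 : ℝ) else 0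

/-- The tangent ball `B̃(a, ε) = {a} ∪ B(a + ε • e, ε)`. -/
def tangentBall (n : ℕ) (a : EuclideanSpace ℝ (Fin n)) (ε : ℝ) :
    Set (EuclideanSpace ℝ (Fin n)) :=
  {a} ∪ ball (a + ε • eVec n) ε

/-- The generating family for the topology `τ(A)` on `X`:
balls `B(a,ε)` with `a ∈ P`, `0 < ε < a (n-1)`; traces `B(a,ε) ∩ X` with `a ∈ A`, `ε > 0`;
and tangent balls `B̃(a,ε)` with `a ∈ L \ A`, `ε > 0`. -/
def niemGen (n : ℕ) (A : Set (EuclideanSpace ℝ (Fin n))) : Set (Set (HalfSpace n)) :=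
  {s | ∃ a ∈ OpenHalf n, ∃ ε, 0 < ε ∧ ε < lastCoord n a ∧
      s = Subtype.val ⁻¹' ball a ε} ∪
  {s | ∃ a ∈ A, ∃ ε, 0 < ε ∧ s = Subtype.val ⁻¹' ball a ε} ∪
  {s | ∃ a ∈ Bdry n \ A, ∃ ε, 0 < ε ∧ s = Subtype.val ⁻¹' tangentBall n a ε}

/-- The topology `τ(A)` on `X`; `τ(∅)` is the Niemytzki topology `τ_N`. -/
def tau (n : ℕ) (A : Set (EuclideanSpace ℝ (Fin n))) : TopologicalSpace (HalfSpace n) :=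
  generateFrom (niemGen n A)

/-- The inclusion of `L` into `X`. -/
def inclLX (n : ℕ) (x : Bdry n) : HalfSpace n := ⟨x.1, le_of_eq x.2.symm⟩

/-- The subspace topology `τ(A)|_L` on `L` induced from `(X, τ(A))`. -/
def tauL (n : ℕ) (A : Set (EuclideanSpace ℝ (Fin n))) : TopologicalSpace (Bdry n) :=
  TopologicalSpace.induced (inclLX n) (tau n A)

/-- A space is perfect if every closed set is a `Gδ`-set. -/
def IsPerfectSpace (X : Type*) [TopologicalSpace X] : Prop :=
  ∀ s : Set X, IsClosed s → IsGδ s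

/-- An `Fσ`-set: a countable union of closed sets. -/
def IsFsigma {X : Type*} [TopologicalSpace X] (s : Set X) : Prop :=
  ∃ F : ℕ → Set X, (∀ i, IsClosed (F i)) ∧ s = ⋃ i, F i

/-- Countably paracompact: every countable open cover admits a locally finite open refinement. -/
def CountablyParacompact (X : Type*) [TopologicalSpace X] : Prop :=
  ∀ u : ℕ → Set X, (∀ i, IsOpen (u i)) → (⋃ i, u i) = Set.univ →
    ∃ (ι : Type) (v : ι → Set X), (∀ j, IsOpen (v j)) ∧ (⋃ j, v j) = Set.univ ∧
      LocallyFinite v ∧ ∀ j, ∃ i, v j ⊆ u i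

/-- A zero set: the zero locus of a continuous real-valued function. -/
def IsZeroSet {X : Type*} [TopologicalSpace X] (s : Set X) : Prop :=
  ∃ f : X → ℝ, Continuous f ∧ s = f ⁻¹' {0}

/-- `Y` is z-embedded in `X` if every zero set of the subspace `Y`
is the trace on `Y` of a zero set of `X`. -/
def ZEmbedded {X : Type*} [TopologicalSpace X] (Y : Set X) : Prop :=
  ∀ s : Set Y, IsZeroSet s → ∃ Z : Set X, IsZeroSet Z ∧ s = Subtype.val ⁻¹' Z

/-- `Y` is `C*`-embedded in `X` if every bounded continuous real-valued function on the
subspace `Y` extends to a bounded continuous function on `X`. -/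
def CStarEmbedded {X : Type*} [TopologicalSpace X] (Y : Set X) : Prop :=
  ∀ f : Y → ℝ, Continuous f → (∃ M, ∀ y, |f y| ≤ M) →
    ∃ g : X → ℝ, Continuous g ∧ (∃ M, ∀ x, |g x| ≤ M) ∧ ∀ y : Y, g ↑y = f y
end

/-! ### Auxiliary development -/

noncomputable section AuxDev

open Metric Set TopologicalSpace

variable {n : ℕ} {A : Set (EuclideanSpace ℝ (Fin n))}

local notation "E'" => EuclideanSpace ℝ (Fin n)

lemma coordLip (x y : EuclideanSpace ℝ (Fin n)) (i : Fin n) :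
    |x i - y i| ≤ dist x y := by
  rw [EuclideanSpace.dist_eq, ← Real.sqrt_sq_eq_abs]
  apply Real.sqrt_le_sqrt
  have := Finset.single_le_sum (f := fun j => dist (x j) (y j) ^ 2)
    (fun j _ => sq_nonneg _) (Finset.mem_univ i)
  simpa [Real.dist_eq] using this

lemma lastCoord_eq (hn : 0 < n) (x : E') :
    lastCoord n x = x ⟨n - 1, Nat.sub_lt hn one_pos⟩ := dif_pos hn

lemma lastCoord_lip (hn : 0 < n) (x y : E') :
    |lastCoord n x - lastCoord n y| ≤ dist x y := by
  rw [lastCoord_eq hn, lastCoord_eq hn]; exact coordLip x y _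

lemma eVec_eq (hn : 0 < n) :
    eVec n = EuclideanSpace.single ⟨n - 1, Nat.sub_lt hn one_pos⟩ (1 : ℝ) := dif_pos hn

lemma norm_eVec (hn : 0 < n) : ‖eVec n‖ = 1 := by
  rw [eVec_eq hn]; simp [EuclideanSpace.norm_single]

lemma lastCoord_add_smul (hn : 0 < n) (a : E') (ε : ℝ) :
    lastCoord n (a + ε • eVec n) = lastCoord n a + ε := by
  rw [lastCoord_eq hn, lastCoord_eq hn, eVec_eq hn]
  simp [EuclideanSpace.single_apply]

lemma dist_add_smul_eVec (hn : 0 < n) (a : E') (r s : ℝ) :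
    dist (a + r • eVec n) (a + s • eVec n) = |r - s| := by
  rw [dist_eq_norm]
  have h : a + r • eVec n - (a + s • eVec n) = (r - s) • eVec n := by module
  rw [h, norm_smul, norm_eVec hn, mul_one, Real.norm_eq_abs]

lemma dist_add_smul_eVec' (hn : 0 < n) (a : E') {r : ℝ} (hr : 0 ≤ r) :
    dist (a + r • eVec n) a = r := by
  have := dist_add_smul_eVec hn a r 0
  simpa [abs_of_nonneg hr] using this

/-- Points of a small ball around a point of `P` are in `P`. -/
lemma pos_of_mem_ball_I (hn : 0 < n) {a : E'} {ε : ℝ} (hε : ε < lastCoord n a)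
    {y : E'} (hy : y ∈ ball a ε) : 0 < lastCoord n y := by
  have h := lastCoord_lip hn a y
  have hd : dist a y < ε := by rwa [dist_comm, ← mem_ball]
  have := abs_le.mp (h.trans hd.le)
  linarith [this.1]

/-- Points of the open part of a tangent ball are in `P`. -/
lemma pos_of_mem_ball_G (hn : 0 < n) {a : E'} (ha : lastCoord n a = 0) {ε : ℝ}
    {y : E'} (hy : y ∈ ball (a + ε • eVec n) ε) : 0 < lastCoord n y := by
  have h := lastCoord_lip hn y (a + ε • eVec n)
  rw [lastCoord_add_smul hn, ha, zero_add] at h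
  have hd : dist y (a + ε • eVec n) < ε := mem_ball.mp hy
  have := abs_lt.mp (lt_of_le_of_lt h hd)
  linarith [this.1]

/-- A boundary point in a tangent ball is its center point. -/
lemma eq_of_mem_tangent_bdry (hn : 0 < n) {a : E'} (ha : lastCoord n a = 0) {ε : ℝ}
    {y : E'} (hy : y ∈ tangentBall n a ε) (hy0 : lastCoord n y = 0) : y = a := by
  rcases hy with hy | hy
  · exact hy
  · exact absurd hy0 (ne_of_gt (pos_of_mem_ball_G hn ha hy))

open Classical in
/-- The canonical basic neighbourhood of a point. -/
def canon (n : ℕ) (A : Set (EuclideanSpace ℝ (Fin n))) (x : EuclideanSpace ℝ (Fin n))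
    (r : ℝ) : Set (HalfSpace n) :=
  if lastCoord n x = 0 ∧ x ∉ A then Subtype.val ⁻¹' tangentBall n x r
  else Subtype.val ⁻¹' ball x r

lemma canon_mem_niemGen (hn : 0 < n) (hA : A ⊆ Bdry n) (x : HalfSpace n) {r : ℝ}
    (hr : 0 < r) (hr' : r < lastCoord n ↑x ∨ lastCoord n ↑x = 0) :
    canon n A ↑x r ∈ niemGen n A := by
  unfold canon niemGen
  by_cases hc : lastCoord n (↑x : E') = 0 ∧ (↑x : E') ∉ A
  · rw [if_pos hc]
    exact Or.inr ⟨↑x, ⟨hc.1, hc.2⟩, r, hr, rfl⟩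
  · rw [if_neg hc]
    push_neg at hc
    by_cases hx0 : lastCoord n (↑x : E') = 0
    · exact Or.inl (Or.inr ⟨↑x, hc hx0, r, hr, rfl⟩)
    · have hpos : 0 < lastCoord n (↑x : E') := lt_of_le_of_ne x.2 (Ne.symm hx0)
      have hrlt : r < lastCoord n (↑x : E') := by
        rcases hr' with h | h
        · exact h
        · exact absurd h hx0
      exact Or.inl (Or.inl ⟨↑x, hpos, r, hr, hrlt, rfl⟩)

lemma mem_canon (x : HalfSpace n) {r : ℝ} (hr : 0 < r) : x ∈ canon n A ↑x r := by
  unfold canon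
  split
  · exact Or.inl rfl
  · exact mem_ball_self hr

lemma canon_mono (hn : 0 < n) (x : E') {r r' : ℝ} (h0 : 0 ≤ r') (h : r' ≤ r) :
    canon n A x r' ⊆ canon n A x r := by
  unfold canon
  split
  · apply preimage_mono
    apply union_subset_union_right
    apply ball_subset_ball'
    rw [dist_add_smul_eVec hn]
    rw [abs_of_nonpos (by linarith)]
    linarith
  · exact preimage_mono (ball_subset_ball h)

lemma canon_P_subset (hn : 0 < n) (hA : A ⊆ Bdry n) (x : HalfSpace n) (c : EuclideanSpace ℝ (Fin n))
    {ε : ℝ} (hpos : 0 < lastCoord n ↑x) (hx : (↑x : EuclideanSpace ℝ (Fin n)) ∈ ball c ε) :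
    ∃ r, 0 < r ∧ (r < lastCoord n ↑x ∨ lastCoord n ↑x = 0) ∧
      canon n A ↑x r ⊆ Subtype.val ⁻¹' ball c ε := by
  have hd : dist (↑x : E') c < ε := mem_ball.mp hx
  set d := dist (↑x : E') c with hdd
  set m := min (ε - d) (lastCoord n ↑x) with hm
  have hm1 : m ≤ ε - d := min_le_left _ _
  have hm2 : m ≤ lastCoord n ↑x := min_le_right _ _
  have hm0 : 0 < m := lt_min (by linarith) hpos
  refine ⟨m / 2, by linarith, Or.inl (by linarith), ?_⟩
  unfold canon
  rw [if_neg (fun h => ne_of_gt hpos h.1)]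
  exact preimage_mono (ball_subset_ball' (by linarith))

/-- Key lemma: each generator contains a canonical neighbourhood around each of its points. -/
lemma key (hn : 0 < n) (hA : A ⊆ Bdry n) {s : Set (HalfSpace n)} (hs : s ∈ niemGen n A)
    (x : HalfSpace n) (hx : x ∈ s) :
    ∃ r, 0 < r ∧ (r < lastCoord n ↑x ∨ lastCoord n ↑x = 0) ∧ canon n A ↑x r ⊆ s := by
  rcases hs with (⟨a, ha, ε, hε, hεa, rfl⟩ | ⟨a, ha, ε, hε, rfl⟩) | ⟨a, ha, ε, hε, rfl⟩
  · -- interior ball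
    exact canon_P_subset hn hA x a (pos_of_mem_ball_I hn hεa hx) hx
  · -- trace ball at a ∈ A
    rcases lt_or_eq_of_le (show 0 ≤ lastCoord n ↑x from x.2) with hpos | h0
    · exact canon_P_subset hn hA x a hpos hx
    · have hd : dist (↑x : E') a < ε := mem_ball.mp hx
      by_cases hxA : (↑x : E') ∈ A
      · refine ⟨ε - dist (↑x : E') a, by linarith, Or.inr h0.symm, ?_⟩
        unfold canon
        rw [if_neg (fun h => h.2 hxA)]
        apply preimage_mono
        apply ball_subset_ball'
        linarith
      · refine ⟨(ε - dist (↑x : E') a) / 2, by linarith, Or.inr h0.symm, ?_⟩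
        unfold canon
        rw [if_pos ⟨h0.symm, hxA⟩]
        intro y hy
        rcases hy with hy | hy
        · have : (↑y : E') = ↑x := hy
          simp only [mem_preimage, mem_ball, this]
          exact hx
        · simp only [mem_preimage, mem_ball]
          have h1 : dist (↑y : E') (↑x + ((ε - dist (↑x : E') a) / 2) • eVec n) <
              (ε - dist (↑x : E') a) / 2 := mem_ball.mp hy
          have h2 : dist ((↑x : E') + ((ε - dist (↑x : E') a) / 2) • eVec n) (↑x : E') =
              (ε - dist (↑x : E') a) / 2 := dist_add_smul_eVec' hn _ (by linarith)
          calc dist (↑y : E') a ≤ dist (↑y : E') (↑x + ((ε - dist (↑x : E') a) / 2) • eVec n)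
                + dist ((↑x : E') + ((ε - dist (↑x : E') a) / 2) • eVec n) (↑x : E')
                + dist (↑x : E') a := dist_triangle4 _ _ _ _
            _ < ε := by rw [h2]; linarith
  · -- tangent ball at a ∈ L \ A
    rcases hx with hx | hx
    · have hxa : (↑x : E') = a := hx
      refine ⟨ε, hε, Or.inr (by rw [hxa]; exact ha.1), ?_⟩
      unfold canon
      rw [if_pos (by rw [hxa]; exact ⟨ha.1, ha.2⟩), hxa]
    · have hpos : 0 < lastCoord n (↑x : E') := pos_of_mem_ball_G hn ha.1 hx
      obtain ⟨r, hr, hr', hsub⟩ := canon_P_subset hn hA x (a + ε • eVec n) hpos hx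
      exact ⟨r, hr, hr', hsub.trans (preimage_mono subset_union_right)⟩

/-- The generating family is a basis of `τ(A)`. -/
lemma isBasis_niemGen (hn : 0 < n) (hA : A ⊆ Bdry n) :
    @IsTopologicalBasis (HalfSpace n) (tau n A) (niemGen n A) := by
  refine @IsTopologicalBasis.mk _ (tau n A) _ ?_ ?_ rfl
  · intro t₁ h₁ t₂ h₂ x hx
    obtain ⟨r₁, hr₁, hc₁, hs₁⟩ := key hn hA h₁ x hx.1
    obtain ⟨r₂, hr₂, hc₂, hs₂⟩ := key hn hA h₂ x hx.2
    refine ⟨canon n A ↑x (min r₁ r₂), ?_, mem_canon x (lt_min hr₁ hr₂), ?_⟩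
    · apply canon_mem_niemGen hn hA x (lt_min hr₁ hr₂)
      rcases hc₁ with h | h
      · exact Or.inl (lt_of_le_of_lt (min_le_left _ _) h)
      · exact Or.inr h
    · exact subset_inter
        ((canon_mono hn _ (le_min hr₁.le hr₂.le) (min_le_left _ _)).trans hs₁)
        ((canon_mono hn _ (le_min hr₁.le hr₂.le) (min_le_right _ _)).trans hs₂)
  · apply eq_univ_of_forall
    intro x
    rcases lt_or_eq_of_le (show 0 ≤ lastCoord n ↑x from x.2) with hpos | h0
    · exact ⟨canon n A ↑x (lastCoord n ↑x / 2),
        canon_mem_niemGen hn hA x (by linarith) (Or.inl (by linarith)),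
        mem_canon x (by linarith)⟩
    · exact ⟨canon n A ↑x 1, canon_mem_niemGen hn hA x one_pos (Or.inr h0.symm),
        mem_canon x one_pos⟩

end AuxDev

lemma tau_isOpen_iff (hn : 0 < n) (hA : A ⊆ Bdry n) {u : Set (HalfSpace n)} :
    @IsOpen _ (tau n A) u ↔ ∀ x ∈ u, ∃ v ∈ niemGen n A, x ∈ v ∧ v ⊆ u :=
  @IsTopologicalBasis.isOpen_iff _ (tau n A) u (niemGen n A) (isBasis_niemGen hn hA)

lemma tau_mem_nhds (hn : 0 < n) (hA : A ⊆ Bdry n) {u : Set (HalfSpace n)}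
    {x : HalfSpace n} (hu : @IsOpen _ (tau n A) u) (hx : x ∈ u) :
    ∃ v ∈ niemGen n A, x ∈ v ∧ v ⊆ u :=
  @IsTopologicalBasis.exists_subset_of_mem_open _ (tau n A) (niemGen n A)
    (isBasis_niemGen hn hA) x u hx hu

noncomputable section AuxDev2

open Metric Set TopologicalSpace MeasureTheory

variable {n : ℕ} {A : Set (EuclideanSpace ℝ (Fin n))}

local notation "E'" => EuclideanSpace ℝ (Fin n)

lemma isClosed_bdry (hn : 0 < n) : IsClosed (Bdry n) := by
  have h : Bdry n = (fun x : E' => x ⟨n - 1, Nat.sub_lt hn one_pos⟩) ⁻¹' {0} := by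
    ext x; simp [Bdry, lastCoord_eq hn]
  rw [h]
  exact isClosed_singleton.preimage (EuclideanSpace.proj _).continuous

lemma isClosed_halfSpace (hn : 0 < n) : IsClosed (HalfSpace n) := by
  have h : HalfSpace n = (fun x : E' => x ⟨n - 1, Nat.sub_lt hn one_pos⟩) ⁻¹' Ici 0 := by
    ext x; simp [HalfSpace, lastCoord_eq hn]
  rw [h]
  exact isClosed_Ici.preimage (EuclideanSpace.proj _).continuous

/-- A closed subset of `L \ A` is countable. -/
lemma countable_of_closed_subset
    (hBern : ∀ K ⊆ Bdry n, IsCompact K → ¬ K.Countable →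
      (K ∩ A).Nonempty ∧ (K ∩ (Bdry n \ A)).Nonempty)
    {C : Set (EuclideanSpace ℝ (Fin n))} (hC : IsClosed C)
    (hsub : C ⊆ Bdry n \ A) : C.Countable := by
  by_contra h
  have hcover : C = ⋃ k : ℕ, C ∩ closedBall 0 k := by
    ext x
    simp only [mem_iUnion, mem_inter_iff, mem_closedBall]
    constructor
    · intro hx
      obtain ⟨k, hk⟩ := exists_nat_ge (dist x 0)
      exact ⟨k, hx, hk⟩
    · rintro ⟨k, hk, -⟩
      exact hk
  have hex : ∃ k : ℕ, ¬ (C ∩ closedBall 0 k).Countable := by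
    by_contra h'
    push_neg at h'
    exact h (hcover ▸ countable_iUnion h')
  obtain ⟨k, hk⟩ := hex
  have hcomp : IsCompact (C ∩ closedBall (0 : E') k) :=
    (isCompact_closedBall (0 : E') k).inter_left hC
  obtain ⟨⟨y, hy1, hy2⟩, -⟩ :=
    hBern _ (fun z hz => (hsub hz.1).1) hcomp hk
  exact (hsub hy1.1).2 hy2

/-- In `[0,1]` minus a countable set there is an uncountable compact set. -/
lemma exists_compact_uncountable_disjoint {D : Set ℝ} (hD : D.Countable) :
    ∃ K ⊆ Icc (0:ℝ) 1 \ D, IsCompact K ∧ ¬ K.Countable := by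
  have hm : MeasurableSet (Icc (0:ℝ) 1 \ D) := measurableSet_Icc.diff hD.measurableSet
  have hv : volume (Icc (0:ℝ) 1 \ D) = 1 := by
    rw [measure_diff_null (hD.measure_zero _)]; simp
  obtain ⟨K, hKs, hKc, hKm⟩ := hm.exists_lt_isCompact_of_ne_top (μ := volume)
    (by rw [hv]; exact ENNReal.one_ne_top) (r := 0) (by rw [hv]; exact zero_lt_one)
  refine ⟨K, hKs, hKc, fun hc => ?_⟩
  rw [hc.measure_zero (volume : Measure ℝ)] at hKm
  exact lt_irrefl _ hKm

/-- If `A` is a Bernstein set of `L` then `L \ A` is uncountable. -/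
lemma uncountable_compl (hn2 : 2 ≤ n)
    (hBern : ∀ K ⊆ Bdry n, IsCompact K → ¬ K.Countable →
      (K ∩ A).Nonempty ∧ (K ∩ (Bdry n \ A)).Nonempty) :
    ¬ (Bdry n \ A).Countable := by
  intro hD
  have h0n : (0:ℕ) < n := by omega
  set j : Fin n := ⟨0, by omega⟩ with hj
  have hji : (⟨n - 1, Nat.sub_lt h0n one_pos⟩ : Fin n) ≠ j := by
    simp only [hj, Fin.ne_iff_vne]
    omega
  set γ : ℝ → E' := fun t => EuclideanSpace.single j t with hγ
  have hγiso : Isometry γ := by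
    intro t s
    rw [edist_dist, edist_dist, hγ]
    rw [EuclideanSpace.dist_single_same]
  have hγinj : Function.Injective γ := hγiso.injective
  have hγB : ∀ t, γ t ∈ Bdry n := by
    intro t
    show lastCoord n _ = 0
    rw [lastCoord_eq h0n, hγ]
    simp [EuclideanSpace.single_apply, hji]
  have hD' : (γ ⁻¹' (Bdry n \ A)).Countable := hD.preimage hγinj
  obtain ⟨K₀, hK₀sub, hK₀c, hK₀unc⟩ := exists_compact_uncountable_disjoint hD'
  have hK₀sub' : K₀ ⊆ Icc (0:ℝ) 1 \ γ ⁻¹' (Bdry n \ A) := hK₀sub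
  set K : Set E' := γ '' K₀ with hK
  have hKcomp : IsCompact K := hK₀c.image hγiso.continuous
  have hKB : K ⊆ Bdry n := by
    rintro _ ⟨t, ht, rfl⟩
    exact hγB t
  have hKunc : ¬ K.Countable := fun h =>
    hK₀unc ((h.preimage hγinj).mono (subset_preimage_image γ K₀))
  obtain ⟨-, ⟨y, hy1, hy2⟩⟩ := hBern K hKB hKcomp hKunc
  obtain ⟨t, ht, rfl⟩ := hy1
  exact (hK₀sub' ht).2 hy2

end AuxDev2

noncomputable section AuxDev3

open Metric Set TopologicalSpace

variable {n : ℕ} {A : Set (EuclideanSpace ℝ (Fin n))}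

local notation "E'" => EuclideanSpace ℝ (Fin n)

lemma lindelof_tau (hn2 : 2 ≤ n) (hA : A ⊆ Bdry n)
    (hBern : ∀ K ⊆ Bdry n, IsCompact K → ¬ K.Countable →
      (K ∩ A).Nonempty ∧ (K ∩ (Bdry n \ A)).Nonempty) :
    @LindelofSpace (HalfSpace n) (tau n A) := by
  have hn : 0 < n := by omega
  refine @LindelofSpace.mk _ (tau n A) (@isLindelof_of_countable_subcover _ (tau n A) univ ?_)
  intro ι U hU hcov
  classical
  have hpt : ∀ x : HalfSpace n, ∃ (i : ι) (c : Set E'), IsOpen c ∧ x ∈ U i ∧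
      (Subtype.val ⁻¹' c : Set (HalfSpace n)) ⊆ U i ∧
      ((0 < lastCoord n ↑x ∨ (↑x : E') ∈ A) → (↑x : E') ∈ c) := by
    intro x
    obtain ⟨i, hi⟩ : ∃ i, x ∈ U i := by simpa using hcov (mem_univ x)
    obtain ⟨g, hg, hxg, hgU⟩ := tau_mem_nhds hn hA (hU i) hi
    rcases hg with (⟨a, ha, ε, hε, hεa, rfl⟩ | ⟨a, ha, ε, hε, rfl⟩) | ⟨a, ha, ε, hε, rfl⟩
    · exact ⟨i, ball a ε, isOpen_ball, hi, hgU, fun _ => hxg⟩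
    · exact ⟨i, ball a ε, isOpen_ball, hi, hgU, fun _ => hxg⟩
    · refine ⟨i, ball (a + ε • eVec n) ε, isOpen_ball, hi,
        (preimage_mono subset_union_right).trans hgU, ?_⟩
      intro hcase
      rcases hxg with hx | hx
      · exfalso
        have hxa : (↑x : E') = a := hx
        rcases hcase with hp | hp
        · rw [hxa] at hp
          exact absurd ha.1 (ne_of_gt hp)
        · rw [hxa] at hp
          exact ha.2 hp
      · exact hx
  choose idx c hcopen hmemU hcsub hcmem using hpt
  -- Lindelöf (for the Euclidean topology) of the union of the open cores
  set W : Set E' := ⋃ x : HalfSpace n, c x with hW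
  have hWlin : IsLindelof (Subtype.val ⁻¹' W : Set (HalfSpace n)) :=
    HereditarilyLindelof_LindelofSets _
  obtain ⟨T, hTct, hTcov⟩ := hWlin.elim_countable_subcover
    (fun x : HalfSpace n => (Subtype.val ⁻¹' c x : Set (HalfSpace n)))
    (fun x => (hcopen x).preimage continuous_subtype_val)
    (by rw [hW, preimage_iUnion])
  -- the leftover set is countable
  set CC : Set E' := HalfSpace n ∩ Wᶜ with hCC
  have hCCclosed : IsClosed CC :=
    (isClosed_halfSpace hn).inter (isOpen_iUnion fun x => hcopen x).isClosed_compl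
  have hCCsub : CC ⊆ Bdry n \ A := by
    rintro z ⟨hz1, hz2⟩
    have hzc := hcmem ⟨z, hz1⟩
    constructor
    · show lastCoord n z = 0
      by_contra h0
      have hpos : 0 < lastCoord n z := lt_of_le_of_ne hz1 (Ne.symm h0)
      exact hz2 (mem_iUnion.mpr ⟨⟨z, hz1⟩, hzc (Or.inl hpos)⟩)
    · intro hzA
      exact hz2 (mem_iUnion.mpr ⟨⟨z, hz1⟩, hzc (Or.inr hzA)⟩)
  have hCCct : CC.Countable := countable_of_closed_subset hBern hCCclosed hCCsub
  have hRct : (Subtype.val ⁻¹' CC : Set (HalfSpace n)).Countable :=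
    hCCct.preimage Subtype.coe_injective
  refine ⟨idx '' T ∪ idx '' (Subtype.val ⁻¹' CC),
    (hTct.image idx).union (hRct.image idx), ?_⟩
  intro x _
  by_cases hxW : (↑x : E') ∈ W
  · obtain ⟨y, hyT, hy⟩ := mem_iUnion₂.mp (hTcov hxW)
    exact mem_iUnion₂.mpr ⟨idx y, Or.inl (mem_image_of_mem idx hyT), hcsub y hy⟩
  · have hxCC : x ∈ (Subtype.val ⁻¹' CC : Set (HalfSpace n)) := ⟨x.2, hxW⟩
    exact mem_iUnion₂.mpr ⟨idx x, Or.inr (mem_image_of_mem idx hxCC), hmemU x⟩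

lemma sA_closed (hn : 0 < n) (hA : A ⊆ Bdry n) :
    @IsClosed (HalfSpace n) (tau n A) (Subtype.val ⁻¹' A) := by
  refine (@isOpen_compl_iff _ _ (tau n A)).mp ((tau_isOpen_iff hn hA).mpr ?_)
  intro x hx
  have hxA : (↑x : E') ∉ A := hx
  rcases lt_or_eq_of_le (show 0 ≤ lastCoord n ↑x from x.2) with hpos | h0
  · refine ⟨canon n A ↑x (lastCoord n ↑x / 2),
      canon_mem_niemGen hn hA x (by linarith) (Or.inl (by linarith)),
      mem_canon x (by linarith), ?_⟩
    unfold canon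
    rw [if_neg (fun h => ne_of_gt hpos h.1)]
    intro y hy
    have hypos : 0 < lastCoord n ↑y := pos_of_mem_ball_I hn (by linarith) hy
    exact fun hyA => ne_of_gt hypos (hA hyA)
  · refine ⟨canon n A ↑x 1,
      canon_mem_niemGen hn hA x one_pos (Or.inr h0.symm),
      mem_canon x one_pos, ?_⟩
    unfold canon
    rw [if_pos ⟨h0.symm, hxA⟩]
    rintro y (hy | hy)
    · have hyx : (↑y : E') = ↑x := hy
      show (↑y : E') ∉ A
      rw [hyx]
      exact hxA
    · exact fun hyA => ne_of_gt (pos_of_mem_ball_G hn h0.symm hy) (hA hyA)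

lemma not_perfect_tau (hn2 : 2 ≤ n) (hA : A ⊆ Bdry n)
    (hBern : ∀ K ⊆ Bdry n, IsCompact K → ¬ K.Countable →
      (K ∩ A).Nonempty ∧ (K ∩ (Bdry n \ A)).Nonempty) :
    ¬ @IsPerfectSpace (HalfSpace n) (tau n A) := by
  have hn : 0 < n := by omega
  intro hperf
  obtain ⟨T, hTopen, hTct, hTeq⟩ := hperf _ (sA_closed hn hA)
  have hV : ∀ t : Set (HalfSpace n), ∃ V : Set E', IsOpen V ∧
      (t ∈ T → (A ⊆ V ∧ ∀ z ∈ Bdry n, z ∈ V →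
        ∀ hz : z ∈ HalfSpace n, (⟨z, hz⟩ : HalfSpace n) ∈ t)) := by
    intro t
    by_cases ht : t ∈ T
    swap
    · exact ⟨univ, isOpen_univ, fun h => absurd h ht⟩
    have hopen := hTopen t ht
    have hsubt : (Subtype.val ⁻¹' A : Set (HalfSpace n)) ⊆ t := by
      intro y hy
      have : y ∈ ⋂₀ T := hTeq ▸ hy
      exact this t ht
    have hba : ∀ a, a ∈ A → ∃ cc ∈ A, ∃ ε, 0 < ε ∧ a ∈ ball cc ε ∧
        (Subtype.val ⁻¹' ball cc ε : Set (HalfSpace n)) ⊆ t := by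
      intro a haA
      have ha0 : lastCoord n a = 0 := hA haA
      have haB : a ∈ HalfSpace n := le_of_eq ha0.symm
      have hat : (⟨a, haB⟩ : HalfSpace n) ∈ t := hsubt haA
      obtain ⟨g, hg, hxg, hgt⟩ := tau_mem_nhds hn hA hopen hat
      rcases hg with (⟨ci, hci, ε, hε, hεa, rfl⟩ | ⟨ci, hci, ε, hε, rfl⟩) |
        ⟨ci, hci, ε, hε, rfl⟩
      · exact absurd (pos_of_mem_ball_I hn hεa hxg)
          (by rw [show lastCoord n a = 0 from ha0]; exact lt_irrefl 0)
      · exact ⟨ci, hci, ε, hε, hxg, hgt⟩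
      · exfalso
        have heq : a = ci := eq_of_mem_tangent_bdry hn hci.1 hxg ha0
        exact hci.2 (heq ▸ haA)
    choose cc hcc εε hεε hmem hsub using hba
    refine ⟨⋃ (a : E') (ha : a ∈ A), ball (cc a ha) (εε a ha),
      isOpen_iUnion fun a => isOpen_iUnion fun ha => isOpen_ball, fun _ => ⟨?_, ?_⟩⟩
    · intro a ha
      exact mem_iUnion.mpr ⟨a, mem_iUnion.mpr ⟨ha, hmem a ha⟩⟩
    · intro z hzB hzV hz
      obtain ⟨a, ha, hzball⟩ := by
        simpa only [mem_iUnion] using hzV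
      exact hsub a ha hzball
  choose V hVopen hVrest using hV
  -- L \ A is covered by the closed sets `Bdry ∩ (V t)ᶜ`, `t ∈ T`
  have hcover : Bdry n \ A ⊆ ⋃ t ∈ T, (Bdry n ∩ (V t)ᶜ) := by
    intro z hz
    by_contra hnot
    simp only [mem_iUnion, mem_inter_iff, mem_compl_iff, not_exists, not_and, not_not] at hnot
    have hzX : z ∈ HalfSpace n := le_of_eq hz.1.symm
    have hmem : (⟨z, hzX⟩ : HalfSpace n) ∈ ⋂₀ T := by
      intro t ht
      exact (hVrest t ht).2 z hz.1 (hnot t ht hz.1) hzX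
    rw [← hTeq] at hmem
    exact hz.2 hmem
  have hctble : (Bdry n \ A).Countable := by
    refine Countable.mono hcover ?_
    refine Countable.biUnion hTct fun t ht => ?_
    refine countable_of_closed_subset hBern
      ((isClosed_bdry hn).inter (hVopen t).isClosed_compl) ?_
    rintro z ⟨hz1, hz2⟩
    exact ⟨hz1, fun hzA => hz2 ((hVrest t ht).1 hzA)⟩
  exact uncountable_compl hn2 hBern hctble

end AuxDev3

/-- For every `n ≥ 2`, if `A` is a Bernstein set of `L` (every uncountable compact subset of
`L` meets both `A` and `L \ A`), then `(X, τ(A))` is Lindelöf but not perfect. -/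
theorem tauA_lindelof_not_perfect_of_bernstein (n : ℕ) (hn : 2 ≤ n)
    (A : Set (EuclideanSpace ℝ (Fin n))) (hA : A ⊆ Bdry n)
    (hBern : ∀ K ⊆ Bdry n, IsCompact K → ¬ K.Countable →
      (K ∩ A).Nonempty ∧ (K ∩ (Bdry n \ A)).Nonempty) :
    @LindelofSpace (HalfSpace n) (tau n A) ∧ ¬ @IsPerfectSpace (HalfSpace n) (tau n A) := by
  exact ⟨lindelof_tau hn hA hBern, not_perfect_tau hn hA hBern⟩
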